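/- arXiv:1101.1993 — 2 statements merged into one kernel-verified Lean document; each statement's English description precedes it below -/
import Mathlib

section
/- Let (G̃, G) be a ℤ/2-pair with covering projection π : G̃ → G. Then for every edge e of G, removing the edge set w_e = π^{−1}(e) from G̃ separates G̃ into exactly two connected components; consequently W = { w_e : e ∈ E(G) } is a wall structure on G̃ (every edge of G̃ lies in exactly one wall of W). -/
/-- A multigraph: a set of vertices `V`, a set of edges `E`, and two endpoint maps.
The pair `(src e, tgt e)` records an (arbitrary) orientation of the unoriented edge `e`;
graphs are regarded as unoriented. -/
structure Multigraph (V E : Type) where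
  src : E → V
  tgt : E → V

namespace Multigraph

variable {V E : Type}

/-- The edge `e` is an edge between `u` and `v` (in either direction). -/
def EndsAt (G : Multigraph V E) (e : E) (u v : V) : Prop :=
  (G.src e = u ∧ G.tgt e = v) ∨ (G.src e = v ∧ G.tgt e = u)

/-- A path (walk) in a multigraph from `u` to `v`: a sequence
`(v₀, e₁, v₁, …, e_n, v_n)` where each `e_i` is an edge between `v_{i-1}` and `v_i`. -/
inductive Walk (G : Multigraph V E) : V → V → Type
  | nil (v : V) : Walk G v v
  | cons {u v w : V} (e : E) (h : G.EndsAt e u v) (p : Walk G v w) : Walk G u w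

namespace Walk

variable {G : Multigraph V E}

/-- The length of a path. -/
def length : ∀ {u v : V}, G.Walk u v → ℕ
  | _, _, .nil _ => 0
  | _, _, .cons _ _ p => length p + 1

/-- The list of edges of a path. -/
def edges : ∀ {u v : V}, G.Walk u v → List E
  | _, _, .nil _ => []
  | _, _, .cons e _ p => e :: edges p

/-- The list of vertices of a path (including the first one). -/
def verts : ∀ {u v : V}, G.Walk u v → List V
  | _, _, .nil v => [v]
  | u, _, .cons _ _ p => u :: verts p

/-- A path has a backtrack if for some `i` it traverses the same edge at steps
`i+1` and `i+2` returning to the same vertex, i.e. `v_i = v_{i+2}` and `e_{i+1} = e_{i+2}`. -/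
def HasBacktrack {u v : V} (p : G.Walk u v) : Prop :=
  ∃ i : ℕ, i + 1 < p.edges.length ∧ p.edges[i]? = p.edges[i + 1]? ∧
    p.verts[i]? = p.verts[i + 2]?

end Walk

/-- A multigraph is connected if any two vertices are joined by a path. -/
def Connected (G : Multigraph V E) : Prop := ∀ u v : V, Nonempty (G.Walk u v)

/-- `u` and `v` can be joined by a path avoiding all edges in `F`. -/
def ReachAvoid (G : Multigraph V E) (F : Set E) (u v : V) : Prop :=
  ∃ p : G.Walk u v, ∀ e ∈ p.edges, e ∉ F

/-- A set of edges `w` is a wall (a cut) if removing these edges from the graph separates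
it into exactly two connected components (the associated half-spaces `A` and `B`). -/
def IsWall (G : Multigraph V E) (w : Set E) : Prop :=
  ∃ A B : Set V, A.Nonempty ∧ B.Nonempty ∧ Disjoint A B ∧ A ∪ B = Set.univ ∧
    ∀ u v : V, G.ReachAvoid w u v ↔ ((u ∈ A ∧ v ∈ A) ∨ (u ∈ B ∧ v ∈ B))

/-- A wall structure: a set of walls such that every edge belongs to exactly one wall. -/
def IsWallStructure (G : Multigraph V E) (W : Set (Set E)) : Prop :=
  (∀ w ∈ W, G.IsWall w) ∧ ∀ e : E, ∃! w, w ∈ W ∧ e ∈ w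

/-- The set of edges `w` separates `u` from `v` if after removing `w` there is
no path from `u` to `v` (i.e. they lie in different half-spaces). -/
def Separates (G : Multigraph V E) (w : Set E) (u v : V) : Prop :=
  ¬ G.ReachAvoid w u v

/-- The wall pseudometric associated with a wall structure `W`:
the number of walls of `W` separating `x` from `y`. -/
noncomputable def wallDistOf (G : Multigraph V E) (W : Set (Set E)) (x y : V) : ℕ :=
  {w : Set E | w ∈ W ∧ G.Separates w x y}.ncard

/-- The graph metric: the length of a shortest path between two vertices. -/
noncomputable def graphDist (G : Multigraph V E) (u v : V) : ℕ :=
  sInf {n : ℕ | ∃ p : G.Walk u v, p.length = n}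

/-- A simple loop: a closed path of positive length with no repeated edges and no
repeated vertices (except that the first and last vertex coincide). -/
def IsSimpleLoop (G : Multigraph V E) {v : V} (p : G.Walk v v) : Prop :=
  0 < p.length ∧ p.edges.Nodup ∧ p.verts.dropLast.Nodup

/-- The girth of a multigraph: the length of a shortest simple loop. -/
noncomputable def girth (G : Multigraph V E) : ℕ :=
  sInf {n : ℕ | ∃ (v : V) (p : G.Walk v v), G.IsSimpleLoop p ∧ p.length = n}

end Multigraph

namespace Multigraph

variable {V E : Type}

/-- A graph is 2-connected if removing any single edge does not disconnect it
(equivalently, every edge lies on a simple loop). -/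
def TwoConnected (G : Multigraph V E) : Prop :=
  G.Connected ∧ ∀ (e : E) (u v : V), G.ReachAvoid {e} u v

/-- `T` is (the edge set of) a spanning tree of the finite graph `G`: the edges of `T`
connect all vertices of `G` and `|T| = |V(G)| - 1` (so the subgraph on `T` is a tree). -/
def IsSpanningTree [Fintype V] (G : Multigraph V E) (T : Finset E) : Prop :=
  (∀ u v : V, ∃ p : G.Walk u v, ∀ e ∈ p.edges, e ∈ T) ∧ T.card + 1 = Fintype.card V

variable [Fintype E] [DecidableEq E]

/-- Given a spanning tree `T` with `S = E \ T = Tᶜ`, crossing the edge `e` changes the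
second coordinate `τ ⊆ S` of a vertex of the `ℤ/2`-homology cover to `τ △ {e}` if `e ∈ S`,
and leaves it unchanged if `e ∈ T`. -/
def tauStep (T : Finset E) (e : E) (τ : {τ : Finset E // τ ⊆ Tᶜ}) :
    {τ : Finset E // τ ⊆ Tᶜ} :=
  if he : e ∈ Tᶜ then
    ⟨symmDiff τ.1 {e}, fun x hx => by
      rcases Finset.mem_symmDiff.mp hx with ⟨h1, _⟩ | ⟨h1, _⟩
      · exact τ.2 h1
      · rwa [Finset.mem_singleton.mp h1]⟩
  else τ

/-- The `ℤ/2`-homology cover of `G` associated with the spanning tree `T` (with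
`S = Tᶜ`): vertices are `V × 𝒫(S)`, edges are `E × 𝒫(S)`, where the edge `(e, τ)`
joins `(x, τ)` to `(y, τ)` if `e ∉ S`, and `(x, τ)` to `(y, τ △ {e})` if `e ∈ S`
with the orientation `x → y`. -/
def cover (G : Multigraph V E) (T : Finset E) :
    Multigraph (V × {τ : Finset E // τ ⊆ Tᶜ}) (E × {τ : Finset E // τ ⊆ Tᶜ}) where
  src p := (G.src p.1, p.2)
  tgt p := (G.tgt p.1, tauStep T p.1 p.2)

/-- The covering projection maps paths in the cover to paths in the base graph,
forgetting the second coordinates. -/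
def projWalk {G : Multigraph V E} {T : Finset E} :
    ∀ {x y : V × {τ : Finset E // τ ⊆ Tᶜ}}, (cover G T).Walk x y → G.Walk x.1 y.1
  | _, _, .nil v => .nil v.1
  | _, _, .cons e h p =>
      .cons e.1
        (by
          rcases h with ⟨h1, h2⟩ | ⟨h1, h2⟩
          · exact Or.inl ⟨congrArg Prod.fst h1, congrArg Prod.fst h2⟩
          · exact Or.inr ⟨congrArg Prod.fst h1, congrArg Prod.fst h2⟩)
        (projWalk p)

/-- A path `p` in `G` from `x₀` to `y₀` is `(x,y)`-admissible (for vertices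
`x = (x₀, τ_x)`, `y = (y₀, τ_y)` of the cover) if for every `e ∈ S = Tᶜ`, the number
of occurrences of `e` among the edges of `p` is odd when `e ∈ τ_x △ τ_y` and even
otherwise. -/
def Admissible (G : Multigraph V E) (T : Finset E)
    (x y : V × {τ : Finset E // τ ⊆ Tᶜ}) (p : G.Walk x.1 y.1) : Prop :=
  ∀ e ∈ (Tᶜ : Finset E),
    p.edges.count e % 2 = if e ∈ symmDiff x.2.1 y.2.1 then 1 else 0

/-- The wall `w_e = π⁻¹(e)` of the `ℤ/2`-homology cover associated to an edge `e` of
the base graph. -/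
def wallOf (G : Multigraph V E) (T : Finset E) (e : E) :
    Set (E × {τ : Finset E // τ ⊆ Tᶜ}) := {f | f.1 = e}

/-- The wall metric on the `ℤ/2`-homology cover: the number of walls
`w_e = π⁻¹(e)`, `e ∈ E(G)`, separating `x` from `y`. -/
noncomputable def wallDist (G : Multigraph V E) (T : Finset E)
    (x y : V × {τ : Finset E // τ ⊆ Tᶜ}) : ℕ :=
  {e : E | (cover G T).Separates (wallOf G T e) x y}.ncard

end Multigraph

/-!
For each edge `e` of `G` there is a function `wallSide e` from the vertices of the cover to
`ℤ/2` that changes value exactly across the edges of `w_e`: for `e ∉ T` it records whether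
`e ∈ τ`, for `e ∈ T` it combines the side of the fundamental cut of `e` with the parity of
the edges of `τ` crossing that cut. So `w_e` separates the two (nonempty) level sets.

Conversely, let `x, y` lie on the same level set. A tree path followed by one loop through
each non-tree edge of `τ_x △ τ_y` lifts to a walk from `x` to `y`; it crosses `w_e` an even
number of times because `wallSide` agrees at both ends. Replacing each traversal of `e` by a
detour avoiding `e` (2-connectivity) changes every edge count by an even number, so the new
walk still lifts to a walk from `x` to `y`, and this lift avoids `w_e`.
-/

open scoped symmDiff

lemma Finset.symmDiff_sdiff_distrib {α : Type} [DecidableEq α] (a b c : Finset α) :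
    (a ∆ b) \ c = (a \ c) ∆ (b \ c) := by
  ext x
  simp only [Finset.mem_sdiff, Finset.mem_symmDiff]
  tauto

lemma Finset.sum_symmDiff_of_charTwo {ι R : Type} [DecidableEq ι] [CommRing R] [CharP R 2]
    (a b : Finset ι) (g : ι → R) :
    ∑ i ∈ a ∆ b, g i = ∑ i ∈ a, g i + ∑ i ∈ b, g i := by
  have hunion : a ∆ b ∪ a ∩ b = a ∪ b := symmDiff_sup_inf a b
  have hdisj : Disjoint (a ∆ b) (a ∩ b) := disjoint_symmDiff_inf a b
  rw [← Finset.sum_union_inter, ← hunion, Finset.sum_union hdisj, add_assoc,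
    CharTwo.add_self_eq_zero, add_zero]

namespace Multigraph

variable {V E : Type} {G : Multigraph V E}

lemma EndsAt.symm {e : E} {u v : V} (h : G.EndsAt e u v) : G.EndsAt e v u :=
  Or.symm h

namespace Walk

def append : ∀ {u v w : V}, G.Walk u v → G.Walk v w → G.Walk u w
  | _, _, _, .nil _, q => q
  | _, _, _, .cons e h p, q => .cons e h (p.append q)

@[simp] lemma edges_append : ∀ {u v w : V} (p : G.Walk u v) (q : G.Walk v w),
    (p.append q).edges = p.edges ++ q.edges
  | _, _, _, .nil _, _ => rfl
  | _, _, _, .cons e _ p, q => congrArg (e :: ·) (edges_append p q)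

def reverse : ∀ {u v : V}, G.Walk u v → G.Walk v u
  | _, _, .nil v => .nil v
  | _, _, .cons e h p => p.reverse.append (.cons e h.symm (.nil _))

@[simp] lemma edges_reverse : ∀ {u v : V} (p : G.Walk u v),
    p.reverse.edges = p.edges.reverse
  | _, _, .nil _ => rfl
  | _, _, .cons e h p => by simp [reverse, edges, edges_reverse p]

variable [DecidableEq E]

def oddEdges {u v : V} (p : G.Walk u v) : Finset E :=
  p.edges.toFinset.filter fun s => Odd (p.edges.count s)

lemma mem_oddEdges {u v : V} {p : G.Walk u v} {s : E} :
    s ∈ p.oddEdges ↔ Odd (p.edges.count s) := by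
  simpa [oddEdges] using fun h => List.count_pos_iff.mp h.pos

@[simp] lemma oddEdges_nil (v : V) : (nil v : G.Walk v v).oddEdges = ∅ := rfl

@[simp] lemma oddEdges_cons {u v w : V} (e : E) (h : G.EndsAt e u v) (p : G.Walk v w) :
    (cons e h p).oddEdges = {e} ∆ p.oddEdges := by
  ext s
  by_cases hs : s = e
  · simp [mem_oddEdges, Finset.mem_symmDiff, edges, Nat.odd_add_one, hs]
  · simp [mem_oddEdges, Finset.mem_symmDiff, edges, List.count_cons_of_ne (Ne.symm hs), hs]

@[simp] lemma oddEdges_append {u v w : V} (p : G.Walk u v) (q : G.Walk v w) :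
    (p.append q).oddEdges = p.oddEdges ∆ q.oddEdges := by
  ext s
  simp only [mem_oddEdges, Finset.mem_symmDiff, edges_append, List.count_append, Nat.odd_add,
    ← Nat.not_odd_iff_even]
  tauto

lemma oddEdges_subset {u v : V} {p : G.Walk u v} {T : Finset E}
    (hp : ∀ f ∈ p.edges, f ∈ T) : p.oddEdges ⊆ T :=
  fun s hs => hp s <| List.count_pos_iff.mp (mem_oddEdges.mp hs).pos

-- Replace each traversal of `e` by the detour `D`, run forwards or backwards.
lemma exists_replace_edge {e : E} (D : G.Walk (G.src e) (G.tgt e)) (hD : e ∉ D.edges) :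
    ∀ {u v : V} (p : G.Walk u v), ∃ p' : G.Walk u v, e ∉ p'.edges ∧
      ∀ s ≠ e, p'.edges.count s = p.edges.count s + p.edges.count e * D.edges.count s
  | _, _, .nil v => ⟨.nil v, by simp [edges]⟩
  | _, _, .cons f h p => by
    obtain ⟨p', hp'e, hp'⟩ := exists_replace_edge D hD p
    by_cases hf : f = e
    · subst hf
      rcases h with ⟨rfl, rfl⟩ | ⟨rfl, rfl⟩
      · refine ⟨D.append p', by simp [hD, hp'e], fun s hs => ?_⟩
        simp [List.count_append, List.count_cons_of_ne (Ne.symm hs), hp' s hs, edges]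
        ring
      · refine ⟨D.reverse.append p', by simp [hD, hp'e], fun s hs => ?_⟩
        simp [List.count_append, List.count_cons_of_ne (Ne.symm hs), hp' s hs, edges]
        ring
    · refine ⟨cons f h p', by simp [edges, hp'e, Ne.symm hf], fun s hs => ?_⟩
      by_cases hfs : f = s
      · subst hfs
        simp [edges, hp' f hs, hf]
        ring
      · simp [edges, hfs, hf, hp' s hs]

lemma exists_avoiding_oddEdges_eq {e : E} (D : G.Walk (G.src e) (G.tgt e)) (hD : e ∉ D.edges)
    {u v : V} (p : G.Walk u v) (hp : Even (p.edges.count e)) :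
    ∃ p' : G.Walk u v, e ∉ p'.edges ∧ p'.oddEdges = p.oddEdges := by
  obtain ⟨p', hp'e, hp'⟩ := exists_replace_edge D hD p
  refine ⟨p', hp'e, Finset.ext fun s => ?_⟩
  rw [mem_oddEdges, mem_oddEdges]
  by_cases hs : s = e
  · subst hs
    simp [List.count_eq_zero.mpr hp'e, hp]
  · rw [hp' s hs, Nat.odd_add, iff_true_intro (hp.mul_right _)]
    simp

end Walk

def ReachIn (G : Multigraph V E) (F : Set E) (u v : V) : Prop :=
  ∃ p : G.Walk u v, ∀ f ∈ p.edges, f ∈ F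

namespace ReachIn

variable {F : Set E} {u v w : V}

lemma refl (u : V) : G.ReachIn F u u :=
  ⟨.nil u, by simp [Walk.edges]⟩

lemma symm (h : G.ReachIn F u v) : G.ReachIn F v u := by
  obtain ⟨p, hp⟩ := h
  exact ⟨p.reverse, by simpa using hp⟩

lemma trans (h : G.ReachIn F u v) (h' : G.ReachIn F v w) : G.ReachIn F u w := by
  obtain ⟨p, hp⟩ := h
  obtain ⟨q, hq⟩ := h'
  exact ⟨p.append q, by simpa [or_imp, forall_and] using And.intro hp hq⟩

lemma of_endsAt {f : E} (hf : f ∈ F) (h : G.EndsAt f u v) : G.ReachIn F u v :=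
  ⟨.cons f h (.nil v), by simpa [Walk.edges] using hf⟩

lemma of_reachIn_endpoints {F' : Set E} (hF : ∀ f ∈ F, G.ReachIn F' (G.src f) (G.tgt f))
    (h : G.ReachIn F u v) : G.ReachIn F' u v := by
  obtain ⟨p, hp⟩ := h
  induction p with
  | nil => exact refl _
  | cons f h p ih =>
    refine .trans ?_ (ih fun g hg => hp g (List.mem_cons_of_mem _ hg))
    have hf := hF f (hp f List.mem_cons_self)
    rcases h with ⟨rfl, rfl⟩ | ⟨rfl, rfl⟩
    exacts [hf, hf.symm]

end ReachIn

lemma card_le_card_add_one_of_reachIn [Fintype V] (F : Finset E)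
    (hF : ∀ u v, G.ReachIn F u v) : Fintype.card V ≤ F.card + 1 := by
  rcases isEmpty_or_nonempty V with hV | hV
  · simp
  let ends : E → Sym2 V := fun f => s(G.src f, G.tgt f)
  let H : SimpleGraph V := SimpleGraph.fromEdgeSet (ends '' F)
  have hH : H.Connected := by
    refine SimpleGraph.Connected.mk fun u v => ?_
    obtain ⟨p, hp⟩ := hF u v
    induction p with
    | nil => rfl
    | @cons u w _ f h p ih =>
      refine .trans ?_ (ih fun g hg => hp g (List.mem_cons_of_mem _ hg))
      by_cases huw : u = w
      · rw [huw]
      refine SimpleGraph.Adj.reachable ⟨⟨f, hp f List.mem_cons_self, ?_⟩, huw⟩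
      rcases h with ⟨rfl, rfl⟩ | ⟨rfl, rfl⟩
      exacts [rfl, Sym2.eq_swap]
  calc Fintype.card V = Nat.card V := Nat.card_eq_fintype_card.symm
    _ ≤ Nat.card H.edgeSet + 1 := hH.card_vert_le_card_edgeSet_add_one
    _ ≤ F.card + 1 := by
      gcongr
      calc Nat.card H.edgeSet = H.edgeSet.ncard := Nat.card_coe_set_eq _
        _ ≤ (ends '' F).ncard :=
          Set.ncard_le_ncard (by simp [H, SimpleGraph.edgeSet_fromEdgeSet])
            (Set.toFinite _)
        _ ≤ (F : Set E).ncard := Set.ncard_image_le F.finite_toSet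
        _ = F.card := Set.ncard_coe_finset F

lemma IsSpanningTree.not_reachIn_erase [Fintype V] [DecidableEq E] {T : Finset E}
    (hT : G.IsSpanningTree T) {e : E} (he : e ∈ T) :
    ¬ G.ReachIn ↑(T.erase e) (G.src e) (G.tgt e) := by
  intro hD
  have hedges : ∀ f ∈ (T : Set E), G.ReachIn ↑(T.erase e) (G.src f) (G.tgt f) := by
    intro f hf
    by_cases hfe : f = e
    · exact hfe ▸ hD
    · exact .of_endsAt (by simpa [hfe] using hf) (Or.inl ⟨rfl, rfl⟩)
  have hcard := card_le_card_add_one_of_reachIn _ fun u v =>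
    ReachIn.of_reachIn_endpoints hedges (hT.1 u v)
  rw [Finset.card_erase_of_mem he] at hcard
  have hpos := Finset.card_pos.mpr ⟨e, he⟩
  have htree := hT.2
  omega

lemma exists_walk_oddEdges_sdiff [DecidableEq E] {T : Finset E} (hT : ∀ u v, G.ReachIn T u v)
    (a b : V) {σ : Finset E} (hσ : Disjoint σ T) : ∃ p : G.Walk a b, p.oddEdges \ T = σ := by
  induction σ using Finset.induction_on with
  | empty =>
    obtain ⟨p, hp⟩ := hT a b
    exact ⟨p, Finset.sdiff_eq_empty_iff_subset.mpr (Walk.oddEdges_subset hp)⟩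
  | @insert s σ hs ih =>
    obtain ⟨p, hp⟩ := ih (Finset.disjoint_insert_left.mp hσ).2
    obtain ⟨q₁, hq₁⟩ := hT b (G.src s)
    obtain ⟨q₂, hq₂⟩ := hT (G.tgt s) b
    have hends : G.EndsAt s (G.src s) (G.tgt s) := Or.inl ⟨rfl, rfl⟩
    refine ⟨p.append (q₁.append (.cons s hends q₂)), ?_⟩
    have hsT : s ∉ T := Finset.disjoint_left.mp hσ (Finset.mem_insert_self s σ)
    rw [Walk.oddEdges_append, Walk.oddEdges_append, Walk.oddEdges_cons]
    simp only [Finset.symmDiff_sdiff_distrib, hp,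
      Finset.sdiff_eq_empty_iff_subset.mpr (Walk.oddEdges_subset hq₁),
      Finset.sdiff_eq_empty_iff_subset.mpr (Walk.oddEdges_subset hq₂),
      Finset.sdiff_eq_self_of_disjoint (Finset.disjoint_singleton_left.mpr hsT)]
    ext x
    by_cases hxs : x = s
    · simp [Finset.mem_symmDiff, hxs, hs]
    · simp [Finset.mem_symmDiff, hxs]

lemma isWall_of_reachAvoid_iff {w : Set E} (ψ : V → ZMod 2) (hψ : Function.Surjective ψ)
    (h : ∀ u v, G.ReachAvoid w u v ↔ ψ u = ψ v) : G.IsWall w := by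
  refine ⟨ψ ⁻¹' {0}, ψ ⁻¹' {1}, hψ 0, hψ 1, ?_, ?_, fun u v => ?_⟩
  · exact Set.disjoint_left.mpr fun u h₀ h₁ => absurd (h₀.symm.trans h₁) (by decide)
  · refine Set.eq_univ_of_forall fun u => ?_
    simpa using (by decide : ∀ a : ZMod 2, a = 0 ∨ a = 1) (ψ u)
  · have hcases : ∀ a b : ZMod 2, a = b ↔ a = 0 ∧ b = 0 ∨ a = 1 ∧ b = 1 := by decide
    simpa [h] using hcases (ψ u) (ψ v)

section Cover

variable [DecidableEq E] {T : Finset E}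

open Classical in
noncomputable def treeSide (G : Multigraph V E) (T : Finset E) (e : E) (v : V) : ZMod 2 :=
  if G.ReachIn ↑(T.erase e) (G.src e) v then 0 else 1

lemma treeSide_eq_of_reachIn {e : E} {u v : V} (h : G.ReachIn ↑(T.erase e) u v) :
    treeSide G T e u = treeSide G T e v := by
  unfold treeSide
  congr 1
  exact propext ⟨fun h' => h'.trans h, fun h' => h'.trans h.symm⟩

lemma treeSide_tgt [Fintype V] (hT : G.IsSpanningTree T) (e : E) {f : E} (hf : f ∈ T) :
    treeSide G T e (G.tgt f) = treeSide G T e (G.src f) + if f = e then 1 else 0 := by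
  by_cases hfe : f = e
  · subst hfe
    rw [treeSide, treeSide, if_pos (ReachIn.refl _), if_neg (hT.not_reachIn_erase hf), if_pos rfl,
      zero_add]
  · rw [treeSide_eq_of_reachIn (.of_endsAt (by simpa [hfe] using hf) (Or.inl ⟨rfl, rfl⟩)),
      if_neg hfe, add_zero]

variable [Fintype E]

lemma coe_tauStep (e : E) (τ : {τ : Finset E // τ ⊆ Tᶜ}) :
    (tauStep T e τ).1 = τ.1 ∆ ({e} \ T) := by
  unfold tauStep
  split_ifs with he
  · rw [Finset.sdiff_eq_self_of_disjoint (by simpa using he)]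
  · rw [Finset.sdiff_eq_empty_iff_subset.mpr (by simpa using he)]
    exact (symmDiff_bot _).symm

lemma tauStep_tauStep (e : E) (τ : {τ : Finset E // τ ⊆ Tᶜ}) :
    tauStep T e (tauStep T e τ) = τ :=
  Subtype.ext (by simp [coe_tauStep, symmDiff_symmDiff_cancel_right])

lemma exists_cover_endsAt {e : E} {u w : V} (h : G.EndsAt e u w)
    (τ : {τ : Finset E // τ ⊆ Tᶜ}) :
    ∃ F, F.1 = e ∧ (cover G T).EndsAt F (u, τ) (w, tauStep T e τ) := by
  rcases h with ⟨rfl, rfl⟩ | ⟨rfl, rfl⟩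
  · exact ⟨(e, τ), rfl, Or.inl ⟨rfl, rfl⟩⟩
  · exact ⟨(e, tauStep T e τ), rfl, Or.inr ⟨rfl, by simp [cover, tauStep_tauStep]⟩⟩

lemma Walk.exists_lift {u v : V} (p : G.Walk u v) (τ : {τ : Finset E // τ ⊆ Tᶜ}) :
    ∃ τ' : {τ : Finset E // τ ⊆ Tᶜ}, τ'.1 = τ.1 ∆ (p.oddEdges \ T) ∧
      ∃ q : (cover G T).Walk (u, τ) (v, τ'), q.edges.map Prod.fst = p.edges := by
  induction p generalizing τ with
  | nil v =>
    refine ⟨τ, ?_, .nil _, rfl⟩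
    rw [oddEdges_nil, Finset.empty_sdiff]
    exact (symmDiff_bot _).symm
  | cons e h p ih =>
    obtain ⟨τ', hτ', q, hq⟩ := ih (tauStep T e τ)
    obtain ⟨F, rfl, hF⟩ := exists_cover_endsAt h τ
    refine ⟨τ', ?_, .cons F hF q, congrArg (F.1 :: ·) hq⟩
    rw [hτ', coe_tauStep, oddEdges_cons, Finset.symmDiff_sdiff_distrib, symmDiff_assoc]

/-- For `e ∈ T` the summand is `1` iff `s` crosses the fundamental cut of `e` (`s ≠ e`
as `τ ⊆ Tᶜ`); for `e ∉ T` the function `treeSide` is constant and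
`wallSide (v, τ) = [e ∈ τ]`. -/
noncomputable def wallSide (G : Multigraph V E) (T : Finset E) (e : E)
    (x : V × {τ : Finset E // τ ⊆ Tᶜ}) : ZMod 2 :=
  treeSide G T e x.1 + ∑ s ∈ x.2.1,
    (treeSide G T e (G.src s) + treeSide G T e (G.tgt s) + if s = e then 1 else 0)

lemma wallSide_tgt [Fintype V] (hT : G.IsSpanningTree T) (e : E)
    (F : E × {τ : Finset E // τ ⊆ Tᶜ}) :
    wallSide G T e ((cover G T).tgt F) = wallSide G T e ((cover G T).src F) +
      if F.1 = e then 1 else 0 := by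
  obtain ⟨f, τ⟩ := F
  simp only [cover, wallSide]
  by_cases hf : f ∈ T
  · have hτ : tauStep T f τ = τ := Subtype.ext (by simp [coe_tauStep, hf])
    rw [hτ, treeSide_tgt hT e hf]
    ring
  · have hτ : (tauStep T f τ).1 = τ.1 ∆ {f} := by simp [coe_tauStep, hf]
    rw [hτ, Finset.sum_symmDiff_of_charTwo, Finset.sum_singleton]
    linear_combination CharTwo.add_self_eq_zero (treeSide G T e (G.tgt f))

lemma wallSide_eq_add_count [Fintype V] (hT : G.IsSpanningTree T) (e : E)
    {x y : V × {τ : Finset E // τ ⊆ Tᶜ}} (q : (cover G T).Walk x y) :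
    wallSide G T e y = wallSide G T e x + ((q.edges.map Prod.fst).count e : ZMod 2) := by
  induction q with
  | nil => simp [Walk.edges]
  | @cons x m z F h q ih =>
    have hstep : wallSide G T e m = wallSide G T e x + if F.1 = e then 1 else 0 := by
      rcases h with ⟨rfl, rfl⟩ | ⟨rfl, rfl⟩
      · exact wallSide_tgt hT e F
      · rw [wallSide_tgt hT e F, add_assoc, CharTwo.add_self_eq_zero, add_zero]
    rw [ih, hstep]
    by_cases hF : F.1 = e
    · simp [Walk.edges, hF]
      ring
    · simp [Walk.edges, hF]

lemma Walk.exists_lift_of_oddEdges {x y : V × {τ : Finset E // τ ⊆ Tᶜ}} (p : G.Walk x.1 y.1)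
    (hp : p.oddEdges \ T = x.2.1 ∆ y.2.1) :
    ∃ q : (cover G T).Walk x y, q.edges.map Prod.fst = p.edges := by
  obtain ⟨τ, hτ, q, hq⟩ := p.exists_lift x.2
  obtain rfl : τ = y.2 := Subtype.ext (by rw [hτ, hp, symmDiff_symmDiff_cancel_left])
  exact ⟨q, hq⟩


lemma wallSide_surjective [Fintype V] (hT : G.IsSpanningTree T) (e : E) :
    Function.Surjective (wallSide G T e) := by
  have hstep := wallSide_tgt hT e (e, ⟨∅, Finset.empty_subset _⟩)
  rw [if_pos rfl] at hstep
  intro z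
  rcases (by decide : ∀ a b : ZMod 2, b = a ∨ b = a + 1) (wallSide G T e ((cover G T).src _)) z
    with h | h
  · exact ⟨_, h.symm⟩
  · exact ⟨_, hstep.trans h.symm⟩

lemma reachAvoid_wallOf_iff [Fintype V] (hG : G.TwoConnected) (hT : G.IsSpanningTree T) (e : E)
    (x y : V × {τ : Finset E // τ ⊆ Tᶜ}) :
    (cover G T).ReachAvoid (wallOf G T e) x y ↔ wallSide G T e x = wallSide G T e y := by
  constructor
  · rintro ⟨q, hq⟩
    have hcount : (q.edges.map Prod.fst).count e = 0 :=
      List.count_eq_zero.mpr fun he => by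
        obtain ⟨F, hF, rfl⟩ := List.mem_map.mp he
        exact hq F hF rfl
    rw [wallSide_eq_add_count hT e q, hcount, Nat.cast_zero, add_zero]
  · intro hside
    have hdisj : Disjoint (x.2.1 ∆ y.2.1) T :=
      Finset.disjoint_left.mpr fun s hs hsT => by
        rcases Finset.mem_symmDiff.mp hs with ⟨hs, -⟩ | ⟨hs, -⟩
        · simpa [hsT] using x.2.2 hs
        · simpa [hsT] using y.2.2 hs
    obtain ⟨p, hp⟩ := exists_walk_oddEdges_sdiff hT.1 x.1 y.1 hdisj
    obtain ⟨q, hq⟩ := p.exists_lift_of_oddEdges hp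
    have heven : Even (p.edges.count e) := by
      rw [← ZMod.natCast_eq_zero_iff_even, ← hq]
      linear_combination -hside - wallSide_eq_add_count hT e q
    obtain ⟨D, hD⟩ := hG.2 e (G.src e) (G.tgt e)
    obtain ⟨p', hp'e, hp'⟩ := Walk.exists_avoiding_oddEdges_eq D (fun h => hD e h rfl) p heven
    obtain ⟨q', hq'⟩ := p'.exists_lift_of_oddEdges (hp' ▸ hp)
    refine ⟨q', fun F hF (hFe : F.1 = e) => hp'e ?_⟩
    rw [← hFe, ← hq']
    exact List.mem_map_of_mem hF

end Cover

end Multigraph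

open Multigraph in
theorem walls_of_Z2_cover_general {V E : Type} [Fintype V] [Fintype E]
    [DecidableEq E] (G : Multigraph V E)
    (hG : G.TwoConnected) (T : Finset E) (hT : G.IsSpanningTree T) :
    (∀ e : E, (cover G T).IsWall (wallOf G T e)) ∧
    (cover G T).IsWallStructure {w | ∃ e : E, w = wallOf G T e} := by
  have hwall (e : E) : (cover G T).IsWall (wallOf G T e) :=
    isWall_of_reachAvoid_iff _ (wallSide_surjective hT e) (reachAvoid_wallOf_iff hG hT e)
  refine ⟨hwall, ⟨fun w ⟨e, hw⟩ => hw ▸ hwall e, fun F => ?_⟩⟩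
  refine ⟨wallOf G T F.1, ⟨⟨F.1, rfl⟩, rfl⟩, ?_⟩
  rintro w ⟨⟨e, rfl⟩, hFe⟩
  rw [show F.1 = e from hFe]

open Multigraph in
/-- For a `ℤ/2`-pair `(G̃, G)`, each `w_e = π⁻¹(e)` is a wall of `G̃ = cover G T`,
and `W = { w_e : e ∈ E(G) }` is a wall structure on `G̃`. -/
theorem walls_of_Z2_cover {V E : Type} [Fintype V] [Fintype E]
    [DecidableEq V] [DecidableEq E] (G : Multigraph V E)
    (hG : G.TwoConnected) (T : Finset E) (hT : G.IsSpanningTree T) :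
    (∀ e : E, (cover G T).IsWall (wallOf G T e)) ∧
    (cover G T).IsWallStructure {w | ∃ e : E, w = wallOf G T e} :=
  walls_of_Z2_cover_general G hG T hT
end

section
/- Let Γ₀ = F₂ be the free group of rank two, and inductively define Γ_n = Γ_{n−1}^{(2)}, the normal subgroup of Γ_{n−1} generated by all squares of elements of Γ_{n−1}. Then ⋂_{n≥1} Γ_n = {1}. -/
/-!
Sanov's matrices `!![1, 2; 0, 1]` and `!![1, 0; 2, 1]` generate a free subgroup of `SL₂(ℤ)`:
playing ping-pong on `ℤ²`, the nonzero powers of the first map the cone `|x| < |y|` into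
`|y| < |x|`, and those of the second map it back. All of their products are `≡ 1 mod 2`, and
`g ≡ 1 mod 2ⁿ` with `n ≥ 1` forces `g² ≡ 1 mod 2ⁿ⁺¹`; as these congruence subgroups are normal,
`Γₙ` is sent into the one of level `2ⁿ⁺¹`. An element of every `Γₙ` is therefore sent to a
matrix congruent to `1` modulo every power of `2`, that is to `1`.
-/

/-- The subgroup `Γ^{(2)}` of a group `Γ`: the normal subgroup generated by the
squares of all elements of `Γ`. -/
def sqNormal (Γ : Type) [Group Γ] : Subgroup Γ :=
  Subgroup.normalClosure {x : Γ | ∃ g : Γ, x = g ^ 2}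

/-- The free group of rank two. -/
abbrev F2 : Type := FreeGroup (Fin 2)

/-- The sequence `Γ₀ = F₂`, `Γ_n = Γ_{n-1}^{(2)}`, each viewed as a subgroup of `F₂`. -/
def Gamma : ℕ → Subgroup F2
  | 0 => ⊤
  | n + 1 => (sqNormal (Gamma n)).map (Gamma n).subtype

open Function
open scoped Pointwise

theorem FreeGroup.injective_lift_of_ping_pong_zpow {ι G α : Type*} [Nontrivial ι] [Group G]
    [MulAction G α] (a : ι → G) (X : ι → Set α) (hXnonempty : ∀ i, (X i).Nonempty)
    (hXdisj : Pairwise (Disjoint on X))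
    (hpp : Pairwise fun i j => ∀ k : ℤ, k ≠ 0 → a i ^ k • X j ⊆ X i) :
    Injective (lift a) := by
  have hlift : lift a = (Monoid.CoprodI.lift fun i => lift fun _ : Unit => a i).comp
      freeGroupEquivCoprodI.toMonoidHom := by
    ext i; simp
  rw [hlift, MonoidHom.coe_comp]
  have hcard : 3 ≤ Cardinal.mk (FreeGroup Unit) :=
    (Cardinal.natCast_lt_aleph0 (n := 3)).le.trans (Cardinal.infinite_iff.1 inferInstance)
  refine (Monoid.CoprodI.lift_injective_of_ping_pong _ (.inr ⟨Classical.arbitrary ι, hcard⟩) X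
    hXnonempty hXdisj fun i j hij h hh => ?_).comp freeGroupEquivCoprodI.injective
  obtain ⟨k, rfl⟩ : ∃ k : ℤ, of () ^ k = h := freeGroupUnitEquivInt.symm.surjective h
  rw [map_zpow, lift_apply_of]
  exact hpp hij k (by rintro rfl; exact hh (zpow_zero _))

namespace LinearEquiv.transvection

variable {R V : Type*} [CommRing R] [AddCommGroup V] [Module R V]

theorem zpow_apply {f : Module.Dual R V} {v : V} (hv : f v = 0) (k : ℤ) (x : V) :
    (transvection hv ^ k) x = x + (k * f x) • v := by
  induction k generalizing x with
  | zero => simp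
  | succ k ih =>
    rw [zpow_add_one, mul_apply, ih, apply, map_add, _root_.map_smul, hv, smul_zero, add_zero]
    push_cast
    module
  | pred k ih =>
    rw [zpow_sub_one, mul_apply, ih, inv_eq hv, apply, map_add, _root_.map_smul, _root_.map_neg,
      hv, neg_zero, smul_zero, add_zero]
    push_cast
    module

end LinearEquiv.transvection

namespace LinearEquiv

variable (R M : Type*) [CommRing R] [AddCommGroup M] [Module R M]

/-- The automorphisms of `M` inducing the identity on `M ⧸ r • M`. -/
def congruenceSubgroup (r : R) : Subgroup (M ≃ₗ[R] M) where
  carrier := {g | ∀ v, ∃ w, g v = v + r • w}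
  one_mem' v := ⟨0, by simp⟩
  mul_mem' {g h} hg hh v := by
    obtain ⟨w, hw⟩ := hh v
    obtain ⟨w', hw'⟩ := hg v
    exact ⟨w' + g w, by rw [mul_apply, hw, map_add, map_smul, hw', smul_add, add_assoc]⟩
  inv_mem' {g} hg v := by
    obtain ⟨w, hw⟩ := hg (g⁻¹ v)
    refine ⟨-w, ?_⟩
    rw [coe_inv, apply_symm_apply] at hw
    rw [coe_inv, smul_neg, ← sub_eq_add_neg, eq_sub_iff_add_eq, ← hw]

variable {R M}

instance (r : R) : (congruenceSubgroup R M r).Normal where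
  conj_mem g hg h v := by
    obtain ⟨w, hw⟩ := hg (h⁻¹ v)
    refine ⟨h w, ?_⟩
    rw [mul_apply, mul_apply, hw, map_add, map_smul, coe_inv, apply_symm_apply]

theorem congruenceSubgroup_le_of_dvd {r r' : R} (h : r ∣ r') :
    congruenceSubgroup R M r' ≤ congruenceSubgroup R M r := by
  obtain ⟨c, rfl⟩ := h
  intro g hg v
  obtain ⟨w, hw⟩ := hg v
  exact ⟨c • w, by rw [hw, mul_smul]⟩

theorem sq_mem_congruenceSubgroup_two_mul {s : R} {g : M ≃ₗ[R] M}
    (hg : g ∈ congruenceSubgroup R M (2 * s)) : g ^ 2 ∈ congruenceSubgroup R M (2 * (2 * s)) := by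
  intro v
  obtain ⟨w, hw⟩ := hg v
  obtain ⟨w', hw'⟩ := hg w
  refine ⟨w + s • w', ?_⟩
  rw [sq, mul_apply, hw, map_add, map_smul, hw, hw']
  module

theorem transvection_mem_congruenceSubgroup {f : Module.Dual R M} {r : R} {u : M}
    (h : f (r • u) = 0) : transvection h ∈ congruenceSubgroup R M r :=
  fun x => ⟨f x • u, by rw [transvection.apply, smul_comm]⟩

end LinearEquiv

open LinearEquiv

theorem map_sqNormal_le {Γ : Type} {G : Type*} [Group Γ] [Group G] (f : Γ →* G) {K : Subgroup G}
    [K.Normal] (hK : ∀ g, f g ^ 2 ∈ K) : (sqNormal Γ).map f ≤ K := by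
  rw [Subgroup.map_le_iff_le_comap]
  refine Subgroup.normalClosure_le_normal ?_
  rintro _ ⟨g, rfl⟩
  simpa using hK g

theorem map_Gamma_le_congruenceSubgroup {R M : Type*} [CommRing R] [AddCommGroup M] [Module R M]
    {ρ : F2 →* (M ≃ₗ[R] M)} (hρ : ρ.range ≤ congruenceSubgroup R M 2) :
    ∀ n, (Gamma n).map ρ ≤ congruenceSubgroup R M (2 ^ (n + 1))
  | 0 => by simpa [Gamma, ← MonoidHom.range_eq_map] using hρ
  | n + 1 => by
    rw [Gamma, Subgroup.map_map, pow_succ', pow_succ']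
    refine map_sqNormal_le _ fun g => sq_mem_congruenceSubgroup_two_mul ?_
    rw [← pow_succ']
    exact map_Gamma_le_congruenceSubgroup hρ n (Subgroup.mem_map_of_mem ρ g.2)

/-- Sanov's matrices `!![1, 2; 0, 1]` and `!![1, 0; 2, 1]`. -/
def sanov : Fin 2 → ((ℤ × ℤ) ≃ₗ[ℤ] ℤ × ℤ) :=
  ![transvection (f := LinearMap.snd ℤ ℤ ℤ) (v := (2 : ℤ) • (1, 0)) (by simp),
    transvection (f := LinearMap.fst ℤ ℤ ℤ) (v := (2 : ℤ) • (0, 1)) (by simp)]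

theorem Int.abs_lt_abs_add_mul_of_abs_lt {x y : ℤ} (hxy : |x| < |y|) {k : ℤ} (hk : k ≠ 0) :
    |y| < |x + k * y * 2| := by
  have hk₁ : 1 ≤ |k| := Int.one_le_abs hk
  have h1 : 2 * |y| ≤ |k * y * 2| := by
    rw [abs_mul, abs_mul, abs_two]
    nlinarith [abs_nonneg y]
  have h2 : |k * y * 2| ≤ |x + k * y * 2| + |x| := by
    simpa using abs_sub (x + k * y * 2) x
  linarith

theorem sanov_zero_zpow_smul_subset {k : ℤ} (hk : k ≠ 0) :
    sanov 0 ^ k • {v : ℤ × ℤ | |v.1| < |v.2|} ⊆ {v | |v.2| < |v.1|} := by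
  rintro _ ⟨v, hv, rfl⟩
  simpa [sanov, transvection.zpow_apply] using Int.abs_lt_abs_add_mul_of_abs_lt hv hk

theorem sanov_one_zpow_smul_subset {k : ℤ} (hk : k ≠ 0) :
    sanov 1 ^ k • {v : ℤ × ℤ | |v.2| < |v.1|} ⊆ {v | |v.1| < |v.2|} := by
  rintro _ ⟨v, hv, rfl⟩
  simpa [sanov, transvection.zpow_apply] using Int.abs_lt_abs_add_mul_of_abs_lt hv hk

theorem Fin.pairwise_two_iff {P : Fin 2 → Fin 2 → Prop} : Pairwise P ↔ P 0 1 ∧ P 1 0 := by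
  simp [Pairwise, Fin.forall_fin_two]

theorem injective_lift_sanov : Injective (FreeGroup.lift sanov) :=
  FreeGroup.injective_lift_of_ping_pong_zpow sanov
    (![{v | |v.2| < |v.1|}, {v | |v.1| < |v.2|}] : Fin 2 → Set (ℤ × ℤ))
    (Fin.forall_fin_two.2 ⟨⟨(1, 0), by simp⟩, ⟨(0, 1), by simp⟩⟩)
    (Fin.pairwise_two_iff.2 ⟨Set.disjoint_left.2 fun _ => lt_asymm (α := ℤ),
      Set.disjoint_left.2 fun _ => lt_asymm (α := ℤ)⟩)
    (Fin.pairwise_two_iff.2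
      ⟨fun _ => sanov_zero_zpow_smul_subset, fun _ => sanov_one_zpow_smul_subset⟩)

theorem Int.eq_zero_of_forall_two_pow_dvd {z : ℤ} (h : ∀ n : ℕ, 2 ^ n ∣ z) : z = 0 := by
  by_contra hz
  obtain ⟨n, hn⟩ := (Int.finiteMultiplicity_iff (a := 2)).2 ⟨by decide, hz⟩
  exact hn (h _)

theorem eq_one_of_forall_mem_congruenceSubgroup_two_pow {g : (ℤ × ℤ) ≃ₗ[ℤ] ℤ × ℤ}
    (h : ∀ n : ℕ, g ∈ congruenceSubgroup ℤ (ℤ × ℤ) (2 ^ n)) : g = 1 := by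
  have hdvd (v : ℤ × ℤ) (n : ℕ) : 2 ^ n ∣ (g v).1 - v.1 ∧ 2 ^ n ∣ (g v).2 - v.2 := by
    obtain ⟨w, hw⟩ := h n v
    simp [hw]
  ext v
  · exact sub_eq_zero.1 (Int.eq_zero_of_forall_two_pow_dvd fun n => (hdvd v n).1)
  · exact sub_eq_zero.1 (Int.eq_zero_of_forall_two_pow_dvd fun n => (hdvd v n).2)

/-- The iterated square subgroups of the free group `F₂` have trivial intersection:
`⋂_{n ≥ 1} Γ_n = {1}`. -/
theorem iInf_Gamma_eq_bot : (⨅ n : ℕ, Gamma (n + 1)) = ⊥ := by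
  refine eq_bot_iff.2 fun w hw => Subgroup.mem_bot.2 ?_
  have hρ : (FreeGroup.lift sanov).range ≤ congruenceSubgroup ℤ (ℤ × ℤ) 2 := by
    refine FreeGroup.range_lift_le ?_
    rintro _ ⟨i, rfl⟩
    fin_cases i <;> exact transvection_mem_congruenceSubgroup (by simp)
  have hmem (n : ℕ) : FreeGroup.lift sanov w ∈ congruenceSubgroup ℤ (ℤ × ℤ) (2 ^ n) :=
    congruenceSubgroup_le_of_dvd (pow_dvd_pow 2 (by omega))
      (map_Gamma_le_congruenceSubgroup hρ (n + 1)
        (Subgroup.mem_map_of_mem _ (Subgroup.mem_iInf.1 hw n)))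
  exact injective_lift_sanov
    ((eq_one_of_forall_mem_congruenceSubgroup_two_pow hmem).trans (map_one _).symm)
end
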